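/- Let $f \in \mathbb{C}[[x,y]]$ have order $m$ (i.e., $f \in \mathfrak{m}^m \setminus \mathfrak{m}^{m+1}$ where $\mathfrak{m} = \langle x, y \rangle$), let $a, b \in \mathbb{C}[[x,y]]$ and $h \in \mathfrak{m}^m$. Then in the dual numbers $\mathbb{C}[[x,y]][\varepsilon]/(\varepsilon^2)$ we have $f + \varepsilon(a \cdot \partial f/\partial x + b \cdot \partial f/\partial y + h) = f(x_a, y_b) + \varepsilon \cdot h(x_a, y_b)$, where $x_a = x + \varepsilon a$, $y_b = y + \varepsilon b$; in particular this element lies in the ideal $\langle x_a, y_b \rangle^m$ of $\mathbb{C}[[x,y]][\varepsilon]/(\varepsilon^2)$. -/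

import Mathlib

/-!
`D = a ∂/∂x + b ∂/∂y` is a derivation, so `φ : g ↦ g + ε D g` is a ring homomorphism into the
dual numbers; it sends `x, y` to `x_a, y_b`. Each coefficient of `g (x_a, y_b)` only involves a
polynomial truncation of `g`, on which substitution and `φ` agree, so `φ g = g (x_a, y_b)`.
Since `ε² = 0`, `f + ε (D f + h) = φ f + ε φ h`, and `φ` maps `⟨x,y⟩^m` into `⟨x_a,y_b⟩^m`.
-/

open MvPowerSeries TrivSqZeroExt DualNumber

noncomputable section

abbrev R2 := MvPowerSeries (Fin 2) ℂ

def Mxy : Ideal R2 := Ideal.span {MvPowerSeries.X 0, MvPowerSeries.X 1}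

/-- Formal partial derivative of a power series in two variables. -/
def pd (i : Fin 2) (f : R2) : R2 :=
  fun d => (d i + 1 : ℂ) * MvPowerSeries.coeff (d + Finsupp.single i 1) f

/-- The element `x + ε a` of the dual numbers over `ℂ[[x,y]]`. -/
def Xa (a : R2) : DualNumber R2 := inl (MvPowerSeries.X 0) + eps * inl a

/-- The element `y + ε b` of the dual numbers over `ℂ[[x,y]]`. -/
def Yb (b : R2) : DualNumber R2 := inl (MvPowerSeries.X 1) + eps * inl b

/-- The `n`-th term of the expansion of `f (x + ε a, y + ε b)`. -/
def termD (a b f : R2) (n : Fin 2 →₀ ℕ) : DualNumber R2 :=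
  inl (MvPowerSeries.C (σ := Fin 2) (R := ℂ) (MvPowerSeries.coeff n f)) *
    (Xa a ^ (n 0) * Yb b ^ (n 1))

/-- Substitution `f (x + ε a, y + ε b)`, defined coefficientwise: each coefficient of
each component only receives contributions from finitely many terms of the expansion. -/
def substDual (a b f : R2) : DualNumber R2 :=
  TrivSqZeroExt.inl (R := R2) (M := R2) ((fun d => MvPowerSeries.coeff d
        (fst (∑ n ∈ Finset.Iic (d + Finsupp.single 0 1 + Finsupp.single 1 1),
          termD a b f n)) : R2)) +
  TrivSqZeroExt.inr (R := R2) (M := R2) ((fun d => MvPowerSeries.coeff d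
        (snd (∑ n ∈ Finset.Iic (d + Finsupp.single 0 1 + Finsupp.single 1 1),
          termD a b f n)) : R2))

namespace Derivation

variable {R A M : Type*} [CommSemiring R] [CommSemiring A] [Algebra R A] [AddCommMonoid M]
  [Module A M] [Module Aᵐᵒᵖ M] [IsCentralScalar A M] [Module R M]

def toTrivSqZeroExt (D : Derivation R A M) : A →+* TrivSqZeroExt A M where
  toFun x := inl x + inr (D x)
  map_one' := by simp
  map_zero' := by simp
  map_add' x y := by ext <;> simp
  map_mul' x y := by ext <;> simp [op_smul_eq_smul, add_comm]

@[simp] lemma fst_toTrivSqZeroExt (D : Derivation R A M) (x : A) :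
    fst (D.toTrivSqZeroExt x) = x := by simp [toTrivSqZeroExt]

@[simp] lemma snd_toTrivSqZeroExt (D : Derivation R A M) (x : A) :
    snd (D.toTrivSqZeroExt x) = D x := by simp [toTrivSqZeroExt]

end Derivation

lemma pd_eq_pderiv (i : Fin 2) (f : R2) : pd i f = pderiv ℂ i f := by
  ext d
  rw [coeff_pderiv, mul_comm]
  rfl

def vectorField (a b : R2) : Derivation ℂ R2 R2 := a • pderiv ℂ 0 + b • pderiv ℂ 1

lemma vectorField_apply (a b g : R2) : vectorField a b g = a * pd 0 g + b * pd 1 g := by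
  simp [vectorField, pd_eq_pderiv]

/-- The substitution `g ↦ g (x + ε a, y + ε b)`, by first-order Taylor expansion. -/
abbrev substEps (a b : R2) : R2 →+* DualNumber R2 := (vectorField a b).toTrivSqZeroExt

lemma substEps_X_zero (a b : R2) : substEps a b (X 0) = Xa a := by
  ext <;> simp [Xa, vectorField]

lemma substEps_X_one (a b : R2) : substEps a b (X 1) = Yb b := by
  ext <;> simp [Yb, vectorField]

lemma substEps_C (a b : R2) (c : ℂ) : substEps a b (C c) = inl (C c) := by
  ext <;> simp [vectorField]

lemma substEps_monomial (a b f : R2) (n : Fin 2 →₀ ℕ) :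
    substEps a b (monomial n (coeff n f)) = termD a b f n := by
  rw [monomial_eq', Finsupp.prod_fintype _ _ (by simp), Fin.prod_univ_two, map_mul, map_mul,
    map_pow, map_pow, substEps_C, substEps_X_zero, substEps_X_one, termD]

lemma sum_termD_eq_substEps_trunc' (a b f : R2) (N : Fin 2 →₀ ℕ) :
    ∑ n ∈ Finset.Iic N, termD a b f n = substEps a b (trunc' ℂ N f) := by
  rw [trunc', truncFinset_apply, ← MvPolynomial.coeToMvPowerSeries.ringHom_apply, map_sum,
    map_sum]
  simp only [MvPolynomial.coeToMvPowerSeries.ringHom_apply, MvPolynomial.coe_monomial,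
    substEps_monomial]

section Truncation

variable {σ R : Type*} [DecidableEq σ] [CommSemiring R]

lemma trunc'_pderiv_trunc' (i : σ) (f : MvPowerSeries σ R) {d N : σ →₀ ℕ}
    (h : d + Finsupp.single i 1 ≤ N) :
    trunc' R d (pderiv R i (trunc' R N f : MvPowerSeries σ R)) = trunc' R d (pderiv R i f) := by
  ext n
  simp only [coeff_trunc', coeff_pderiv, MvPolynomial.coeff_coe]
  split_ifs with hn hN
  · rfl
  · exact absurd ((add_le_add_left hn _).trans h) hN
  · rfl

lemma coeff_mul_pderiv_trunc' (c : MvPowerSeries σ R) (i : σ) (f : MvPowerSeries σ R)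
    {d N : σ →₀ ℕ} (h : d + Finsupp.single i 1 ≤ N) :
    coeff d (c * pderiv R i (trunc' R N f : MvPowerSeries σ R)) = coeff d (c * pderiv R i f) := by
  rw [← coeff_trunc'_mul_trunc'_eq_coeff_mul d _ _ le_rfl, trunc'_pderiv_trunc' i f h,
    coeff_trunc'_mul_trunc'_eq_coeff_mul d _ _ le_rfl]

end Truncation

lemma substDual_eq_substEps (a b f : R2) : substDual a b f = substEps a b f := by
  have hfst : ∀ d : Fin 2 →₀ ℕ, d ≤ d + Finsupp.single 0 1 + Finsupp.single 1 1 :=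
    fun d => le_self_add.trans le_self_add
  have hsnd₀ : ∀ d : Fin 2 →₀ ℕ,
      d + Finsupp.single 0 1 ≤ d + Finsupp.single 0 1 + Finsupp.single 1 1 := fun d => le_self_add
  have hsnd₁ : ∀ d : Fin 2 →₀ ℕ,
      d + Finsupp.single 1 1 ≤ d + Finsupp.single 0 1 + Finsupp.single 1 1 :=
    fun d => add_right_comm d (Finsupp.single 0 1) _ ▸ le_self_add
  change inl _ + inr _ = inl f + inr (vectorField a b f)
  congr 2 <;> funext d
  · change coeff d (fst _) = coeff d f
    simp [sum_termD_eq_substEps_trunc', coeff_trunc', hfst]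
  · change coeff d (snd _) = coeff d (vectorField a b f)
    simp [sum_termD_eq_substEps_trunc', vectorField, coeff_mul_pderiv_trunc', hsnd₀, hsnd₁]

theorem equimultiple_along_section_general (m : ℕ) (f a b h : R2)
    (hf : f ∈ Mxy ^ m) (hh : h ∈ Mxy ^ m) :
    (TrivSqZeroExt.inl f + eps * TrivSqZeroExt.inl (a * pd 0 f + b * pd 1 f + h)
        : DualNumber R2)
      = substDual a b f + eps * substDual a b h ∧
    (TrivSqZeroExt.inl f + eps * TrivSqZeroExt.inl (a * pd 0 f + b * pd 1 f + h)
        : DualNumber R2)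
      ∈ Ideal.span {Xa a, Yb b} ^ m := by
  have hexpand : (inl f + eps * inl (a * pd 0 f + b * pd 1 f + h) : DualNumber R2)
      = substEps a b f + eps * substEps a b h := by
    ext <;> simp [vectorField_apply]
  have hmap : (Mxy ^ m).map (substEps a b) = Ideal.span {Xa a, Yb b} ^ m := by
    rw [Ideal.map_pow, Mxy, Ideal.map_span, Set.image_pair, substEps_X_zero, substEps_X_one]
  rw [hexpand, substDual_eq_substEps, substDual_eq_substEps, ← hmap]
  exact ⟨rfl, add_mem (Ideal.mem_map_of_mem _ hf)
    (Ideal.mul_mem_left _ _ (Ideal.mem_map_of_mem _ hh))⟩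

/-- If `ord f = m` and `h ∈ ⟨x,y⟩^m`, then
`f + ε (a f_x + b f_y + h) = f(x_a, y_b) + ε ⬝ h(x_a, y_b)`, and in particular this
element lies in `⟨x_a, y_b⟩^m` where `x_a = x + ε a`, `y_b = y + ε b`. -/
theorem equimultiple_along_section (m : ℕ) (f a b h : R2)
    (hf : f ∈ Mxy ^ m) (hf' : f ∉ Mxy ^ (m + 1)) (hh : h ∈ Mxy ^ m) :
    (TrivSqZeroExt.inl f + eps * TrivSqZeroExt.inl (a * pd 0 f + b * pd 1 f + h)
        : DualNumber R2)
      = substDual a b f + eps * substDual a b h ∧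
    (TrivSqZeroExt.inl f + eps * TrivSqZeroExt.inl (a * pd 0 f + b * pd 1 f + h)
        : DualNumber R2)
      ∈ Ideal.span {Xa a, Yb b} ^ m :=
  equimultiple_along_section_general m f a b h hf hh

end
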